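/- Let μ be a compactly supported probability measure on ℝ₊ and θ ≥ 0, δ ∈ (0,1]. Define C(λ) = δλS_μ(λ)² + (1-δ)S_μ(λ) for real λ > max supp(μ). Then C is strictly decreasing and positive on (max supp(μ), ∞) with C(λ) → 0 as λ → ∞. Consequently, the equation 1 - θ²C(λ) = 0 has at most one solution λ* > max supp(μ), and a solution exists if and only if θ² > 1/C(b⁺), where C(b⁺) = lim_{λ→b⁺} C(λ) ∈ (0,∞] and b = max supp(μ). -/

import Mathlib

open MeasureTheory Filter

/-- On (b,∞) beyond the support of μ, C(λ) = δλS_μ(λ)² + (1-δ)S_μ(λ) is strictly decreasing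
and positive, tends to 0 at ∞; hence 1 - θ²C(λ) = 0 has at most one solution, and a solution
exists iff θ²·C takes values above 1 near the edge (i.e. θ² > 1/C(b⁺)). -/
theorem C_monotone_phase_transition (μ : Measure ℝ) [IsProbabilityMeasure μ]
    (b : ℝ) (hb : 0 ≤ b)
    (hpos : μ (Set.Iio 0) = 0) (hsupp : μ (Set.Ioi b) = 0)
    (θ δ : ℝ) (hθ : 0 ≤ θ) (hδ : δ ∈ Set.Ioc (0:ℝ) 1)
    (S C : ℝ → ℝ)
    (hS : ∀ l, S l = ∫ x, (l - x)⁻¹ ∂μ)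
    (hC : ∀ l, C l = δ * l * (S l)^2 + (1 - δ) * S l) :
    StrictAntiOn C (Set.Ioi b) ∧
    (∀ l ∈ Set.Ioi b, 0 < C l) ∧
    Tendsto C atTop (nhds 0) ∧
    (∀ x ∈ Set.Ioi b, ∀ y ∈ Set.Ioi b, 1 - θ^2 * C x = 0 → 1 - θ^2 * C y = 0 → x = y) ∧
    ((∃ l ∈ Set.Ioi b, 1 - θ^2 * C l = 0) ↔ (∃ l ∈ Set.Ioi b, 1 < θ^2 * C l)) := by
  obtain ⟨hδ0, hδ1⟩ := hδ
  -- μ is concentrated on [0, b]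
  have hae : ∀ᵐ x ∂μ, x ∈ Set.Icc 0 b := by
    rw [ae_iff]
    refine measure_mono_null (fun x hx => ?_) (measure_union_null hpos hsupp)
    simp only [Set.mem_Icc, not_and_or, not_le, Set.mem_setOf_eq] at hx
    simpa [Set.mem_union, Set.mem_Iio, Set.mem_Ioi] using hx
  -- integrability of the Stieltjes integrand
  have hint : ∀ l, b < l → Integrable (fun x => (l - x)⁻¹) μ := by
    intro l hl
    refine Integrable.mono' (integrable_const ((l - b)⁻¹))
      ((measurable_const.sub measurable_id).inv.aestronglyMeasurable) ?_
    filter_upwards [hae] with x hx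
    obtain ⟨hx0, hxb⟩ := hx
    have h1 : (0:ℝ) < l - x := by linarith
    rw [Real.norm_eq_abs, abs_of_pos (inv_pos.2 h1)]
    gcongr <;> linarith
  -- S is positive beyond the support
  have hSpos : ∀ l, b < l → 0 < S l := by
    intro l hl
    have hl0 : 0 < l := lt_of_le_of_lt hb hl
    have : l⁻¹ ≤ S l := by
      rw [hS]
      have := integral_mono_ae (integrable_const l⁻¹) (hint l hl) ?_
      · simpa using this
      · filter_upwards [hae] with x hx
        obtain ⟨hx0, hxb⟩ := hx
        gcongr <;> linarith
    exact lt_of_lt_of_le (inv_pos.2 hl0) this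
  -- S is bounded above by (l - b)⁻¹
  have hSle : ∀ l, b < l → S l ≤ (l - b)⁻¹ := by
    intro l hl
    rw [hS]
    have := integral_mono_ae (hint l hl) (integrable_const ((l - b)⁻¹)) ?_
    · simpa using this
    · filter_upwards [hae] with x hx
      obtain ⟨hx0, hxb⟩ := hx
      gcongr <;> linarith
  -- S is strictly decreasing beyond the support
  have hSanti : ∀ l1 l2, b < l1 → l1 < l2 → S l2 < S l1 := by
    intro l1 l2 h1 h2
    have hl10 : 0 < l1 := lt_of_le_of_lt hb h1
    have hl20 : 0 < l2 := by linarith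
    set c : ℝ := (l2 - l1) / (l1 * l2) with hc
    have hcpos : 0 < c := div_pos (by linarith) (mul_pos hl10 hl20)
    have key : S l2 + c ≤ S l1 := by
      rw [hS, hS]
      have hadd : (∫ x, (l2 - x)⁻¹ ∂μ) + c = ∫ x, ((l2 - x)⁻¹ + c) ∂μ := by
        rw [integral_add (hint l2 (by linarith)) (integrable_const c)]
        simp
      rw [hadd]
      refine integral_mono_ae (Integrable.add (hint l2 (by linarith)) (integrable_const c))
        (hint l1 h1) ?_
      filter_upwards [hae] with x hx
      obtain ⟨hx0, hxb⟩ := hx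
      have ha : (0:ℝ) < l1 - x := by linarith
      have hb2 : (0:ℝ) < l2 - x := by linarith
      have hdiff : (l1 - x)⁻¹ - (l2 - x)⁻¹ = (l2 - l1) / ((l1 - x) * (l2 - x)) := by
        field_simp
        ring
      have hle : c ≤ (l2 - l1) / ((l1 - x) * (l2 - x)) := by
        rw [hc, div_le_div_iff₀ (by positivity) (mul_pos ha hb2)]
        nlinarith [mul_nonneg (by linarith : (0:ℝ) ≤ l2 - l1)
          (mul_nonneg hx0 (by linarith : (0:ℝ) ≤ l1 + l2 - x))]
      linarith [hle, hdiff]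
    linarith
  -- l ↦ l * S l is decreasing
  have hTanti : ∀ l1 l2, b < l1 → l1 < l2 → l2 * S l2 ≤ l1 * S l1 := by
    intro l1 l2 h1 h2
    rw [hS, hS, ← integral_const_mul, ← integral_const_mul]
    refine integral_mono_ae ((hint l2 (by linarith)).const_mul l2)
      ((hint l1 h1).const_mul l1) ?_
    filter_upwards [hae] with x hx
    obtain ⟨hx0, hxb⟩ := hx
    have ha : (0:ℝ) < l1 - x := by linarith
    have hb2 : (0:ℝ) < l2 - x := by linarith
    rw [← div_eq_mul_inv, ← div_eq_mul_inv, div_le_div_iff₀ hb2 ha]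
    nlinarith
  -- l * S l ≥ 1
  have hT1 : ∀ l, b < l → 1 ≤ l * S l := by
    intro l hl
    rw [hS, ← integral_const_mul]
    have := integral_mono_ae (integrable_const (1:ℝ)) ((hint l hl).const_mul l) ?_
    · simpa using this
    · filter_upwards [hae] with x hx
      obtain ⟨hx0, hxb⟩ := hx
      have ha : (0:ℝ) < l - x := by linarith
      rw [← div_eq_mul_inv, le_div_iff₀ ha]
      linarith
  -- C is strictly decreasing
  have hCanti : StrictAntiOn C (Set.Ioi b) := by
    intro l1 hl1 l2 hl2 h12
    simp only [Set.mem_Ioi] at hl1 hl2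
    have hs1 := hSpos l1 hl1
    have hs2 := hSpos l2 hl2
    have hsa := hSanti l1 l2 hl1 h12
    have hta := hTanti l1 l2 hl1 h12
    have ht1 := hT1 l1 hl1
    have ht2 := hT1 l2 hl2
    rw [hC, hC]
    have e1 : δ * l2 * S l2 ^ 2 = δ * (l2 * S l2) * S l2 := by ring
    have e2 : δ * l1 * S l1 ^ 2 = δ * (l1 * S l1) * S l1 := by ring
    rw [e1, e2]
    have step1 : δ * (l2 * S l2) * S l2 ≤ δ * (l1 * S l1) * S l2 := by
      have := mul_le_mul_of_nonneg_left hta hδ0.le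
      exact mul_le_mul_of_nonneg_right this hs2.le
    have step2 : δ * (l1 * S l1) * S l1 > δ * (l1 * S l1) * S l2 := by
      have hpos1 : 0 < δ * (l1 * S l1) := mul_pos hδ0 (lt_of_lt_of_le one_pos ht1)
      exact mul_lt_mul_of_pos_left hsa hpos1
    have step3 : (1 - δ) * S l2 ≤ (1 - δ) * S l1 :=
      mul_le_mul_of_nonneg_left hsa.le (by linarith)
    linarith
  -- C is positive
  have hCpos : ∀ l ∈ Set.Ioi b, 0 < C l := by
    intro l hl
    simp only [Set.mem_Ioi] at hl
    have hl0 : 0 < l := lt_of_le_of_lt hb hl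
    have hs := hSpos l hl
    rw [hC]
    nlinarith [mul_pos (mul_pos hδ0 hl0) (pow_pos hs 2),
      mul_nonneg (by linarith : (0:ℝ) ≤ 1 - δ) hs.le]
  -- C tends to 0 at infinity
  have hg1 : Tendsto (fun l : ℝ => (l - b)⁻¹) atTop (nhds 0) :=
    tendsto_inv_atTop_zero.comp (tendsto_atTop_add_const_right _ (-b) tendsto_id)
  have hg2 : Tendsto (fun l : ℝ => l * (l - b)⁻¹) atTop (nhds 1) := by
    have heq : (fun l : ℝ => 1 + b * (l - b)⁻¹) =ᶠ[atTop] fun l => l * (l - b)⁻¹ := by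
      filter_upwards [eventually_gt_atTop b] with l hl
      have : l - b ≠ 0 := by linarith
      field_simp
      ring
    refine Tendsto.congr' heq ?_
    have := (hg1.const_mul b).const_add 1
    simpa using this
  have hbound : Tendsto (fun l : ℝ => δ * (l * (l - b)⁻¹ * (l - b)⁻¹) + (1 - δ) * (l - b)⁻¹)
      atTop (nhds 0) := by
    have h1 := ((hg2.mul hg1).const_mul δ).add (hg1.const_mul (1 - δ))
    simpa using h1
  have htendC : Tendsto C atTop (nhds 0) := by
    refine tendsto_of_tendsto_of_tendsto_of_le_of_le' tendsto_const_nhds hbound ?_ ?_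
    · filter_upwards [eventually_gt_atTop b] with l hl
      exact (hCpos l hl).le
    · filter_upwards [eventually_gt_atTop b] with l hl
      have hl0 : 0 < l := lt_of_le_of_lt hb hl
      have hs := hSpos l hl
      have hle := hSle l hl
      have hi : (0:ℝ) < (l - b)⁻¹ := inv_pos.2 (by linarith)
      rw [hC]
      have h1 : S l * S l ≤ (l - b)⁻¹ * (l - b)⁻¹ :=
        mul_le_mul hle hle (le_of_lt hs) (le_of_lt hi)
      nlinarith [mul_le_mul_of_nonneg_left h1 (le_of_lt (mul_pos hδ0 hl0)),
        mul_le_mul_of_nonneg_left hle (by linarith : (0:ℝ) ≤ 1 - δ)]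
  -- C is continuous on (b, ∞)
  have hCcont : ∀ l0, b < l0 → ContinuousAt C l0 := by
    intro l0 hl0
    have hScontAt : ContinuousAt S l0 := by
      have hfun : S = fun l => ∫ x, (l - x)⁻¹ ∂μ := funext hS
      rw [hfun]
      set m := (b + l0) / 2 with hm
      have hmb : b < m := by rw [hm]; linarith
      have hml : m < l0 := by rw [hm]; linarith
      refine continuousAt_of_dominated (F := fun l x => (l - x)⁻¹)
        (bound := fun _ => (m - b)⁻¹) ?_ ?_ (integrable_const _) ?_
      · exact Eventually.of_forall fun l =>
          ((measurable_const.sub measurable_id).inv.aestronglyMeasurable)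
      · filter_upwards [eventually_gt_nhds hml] with l hl
        filter_upwards [hae] with x hx
        obtain ⟨hx0, hxb⟩ := hx
        have h1 : (0:ℝ) < l - x := by linarith
        rw [Real.norm_eq_abs, abs_of_pos (inv_pos.2 h1)]
        gcongr <;> linarith
      · filter_upwards [hae] with x hx
        obtain ⟨hx0, hxb⟩ := hx
        exact (continuousAt_id.sub continuousAt_const).inv₀ (by simp; linarith)
    have hfun : C = fun l => δ * l * (S l)^2 + (1 - δ) * S l := funext hC
    rw [hfun]
    exact ((continuousAt_const.mul continuousAt_id).mul (hScontAt.pow 2)).add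
      (continuousAt_const.mul hScontAt)
  refine ⟨hCanti, hCpos, htendC, ?_, ?_⟩
  -- uniqueness
  · intro x hx y hy h1 h2
    have hθ2 : θ ^ 2 ≠ 0 := by
      intro h
      rw [h] at h1
      norm_num at h1
    have hCxy : C x = C y := by
      have : θ ^ 2 * C x = θ ^ 2 * C y := by linarith
      exact mul_left_cancel₀ hθ2 this
    exact hCanti.injOn hx hy hCxy
  -- existence iff
  · constructor
    · rintro ⟨l, hl, heq⟩
      simp only [Set.mem_Ioi] at hl
      have hCl := hCpos l (Set.mem_Ioi.mpr hl)
      have hmul : θ ^ 2 * C l = 1 := by linarith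
      have hθ2 : 0 < θ ^ 2 := by
        rcases lt_or_eq_of_le (sq_nonneg θ) with h | h
        · exact h
        · rw [← h] at hmul; norm_num at hmul
      set m := (b + l) / 2 with hm
      have hmb : b < m := by rw [hm]; linarith
      have hml : m < l := by rw [hm]; linarith
      refine ⟨m, Set.mem_Ioi.mpr hmb, ?_⟩
      have := hCanti (Set.mem_Ioi.mpr hmb) (Set.mem_Ioi.mpr hl) hml
      calc 1 = θ ^ 2 * C l := hmul.symm
        _ < θ ^ 2 * C m := by exact mul_lt_mul_of_pos_left this hθ2
    · rintro ⟨l, hl, hlt⟩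
      simp only [Set.mem_Ioi] at hl
      have hCl := hCpos l (Set.mem_Ioi.mpr hl)
      have hθ2 : 0 < θ ^ 2 := by
        rcases lt_or_eq_of_le (sq_nonneg θ) with h | h
        · exact h
        · rw [← h] at hlt; norm_num at hlt
      have hCl' : 1 / θ ^ 2 < C l := by
        rw [div_lt_iff₀ hθ2]
        linarith [hlt, mul_comm (θ ^ 2) (C l)]
      have hLex : ∃ L, C L < 1 / θ ^ 2 ∧ l < L := by
        have h1 : ∀ᶠ L in atTop, C L < 1 / θ ^ 2 := by
          have : (0:ℝ) < 1 / θ ^ 2 := by positivity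
          exact htendC.eventually (eventually_lt_nhds this)
        exact ((h1.and (eventually_gt_atTop l)).exists)
      obtain ⟨L, hCL, hlL⟩ := hLex
      have hsub : Set.Icc l L ⊆ Set.Ioi b := fun z hz => lt_of_lt_of_le hl hz.1
      have hcont : ContinuousOn C (Set.Icc l L) := fun z hz =>
        (hCcont z (hsub hz)).continuousWithinAt
      have hIVT := intermediate_value_Icc' (le_of_lt hlL) hcont
      have hmem : 1 / θ ^ 2 ∈ Set.Icc (C L) (C l) := ⟨hCL.le, hCl'.le⟩
      obtain ⟨ls, hlsmem, hlseq⟩ := hIVT hmem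
      refine ⟨ls, hsub hlsmem, ?_⟩
      rw [hlseq]
      field_simp
      rw [div_self (by rintro rfl; norm_num at hθ2), sub_self]
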